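/- For every natural number n ≥ 5, the alternating group A_n is generated by the 3-cycles of the form (1, i, i+2) for i ∈ {2, ..., n-2}. -/

import Mathlib

open Fin.NatCast

/-!
Write `t x` for the transposition `swap 1 x`. The generator `(1, i, i+2)` is `t (i+2) * t i`, and
`x ~ y :↔ t x * t y ∈ K` is an equivalence relation for any subgroup `K`. The generators link `i` to
`i + 2`, and the commutator of `(1, 3, 5)` and `(1, 2, 4)` is `t 2 * t 3`, which links the even
points to the odd ones; so `t x * t y ∈ K` for all `x, y ∈ {2, ..., n}`. Every 3-cycle on
`{1, ..., n}` is a product of at most two such elements, and the 3-cycles generate `A_n`.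
-/

open Equiv Equiv.Perm
open scoped commutatorElement

namespace Equiv.Perm

variable {α : Type*} [DecidableEq α]

theorem eq_swap_mul_swap_iff {g : Perm α} {a b c : α} (hab : a ≠ b) (hac : a ≠ c) (hbc : b ≠ c) :
    g = swap a c * swap a b ↔
      g a = b ∧ g b = c ∧ g c = a ∧ ∀ x, x ≠ a → x ≠ b → x ≠ c → g x = x := by
  have hs : (swap a c * swap a b) a = b ∧ (swap a c * swap a b) b = c ∧
      (swap a c * swap a b) c = a ∧ ∀ x, x ≠ a → x ≠ b → x ≠ c → (swap a c * swap a b) x = x := by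
    refine ⟨?_, ?_, ?_, fun x hxa hxb hxc => ?_⟩ <;>
      simp [swap_apply_of_ne_of_ne, hab.symm, hac.symm, hbc.symm, *]
  refine ⟨fun h => h ▸ hs, fun ⟨ha, hb, hc, hx⟩ => ?_⟩
  obtain ⟨ha', hb', hc', hx'⟩ := hs
  ext x
  by_cases hxa : x = a
  · rw [hxa, ha, ha']
  by_cases hxb : x = b
  · rw [hxb, hb, hb']
  by_cases hxc : x = c
  · rw [hxc, hc, hc']
  rw [hx x hxa hxb hxc, hx' x hxa hxb hxc]

theorem swap_mul_swap_eq_pivot {p a b c : α} (hpa : p ≠ a) (hpc : p ≠ c) (hab : a ≠ b)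
    (hcb : c ≠ b) :
    swap a b * swap b c = (swap p b * swap p a) * (swap p c * swap p b) := by
  rw [swap_comm a b, ← swap_mul_swap_mul_swap hpa.symm hab, ← swap_mul_swap_mul_swap hpc.symm hcb,
    swap_comm a p, swap_comm c p]
  simp only [mul_assoc, swap_mul_self_mul]

theorem commutatorElement_swap_mul_swap {p a b c d : α} (hpa : p ≠ a) (hpb : p ≠ b)
    (hpc : p ≠ c) (hpd : p ≠ d) (hab : a ≠ b) (hac : a ≠ c) (had : a ≠ d) (hbc : b ≠ c)
    (hbd : b ≠ d) (hcd : c ≠ d) :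
    ⁅swap p b * swap p a, swap p d * swap p c⁆ = swap p c * swap p a := by
  ext x
  simp only [commutatorElement_def, mul_inv_rev, swap_inv, Perm.mul_apply]
  by_cases hx : x = p ∨ x = a ∨ x = b ∨ x = c ∨ x = d
  · rcases hx with rfl | rfl | rfl | rfl | rfl <;>
      simp [swap_apply_of_ne_of_ne, *, hpa.symm, hpb.symm, hpc.symm, hpd.symm, hab.symm, hac.symm,
        had.symm, hbc.symm, hbd.symm, hcd.symm]
  · push Not at hx
    simp [swap_apply_of_ne_of_ne, *]

theorem equivalence_swap_mul_swap_mem (K : Subgroup (Perm α)) (p : α) :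
    Equivalence fun a b => swap p a * swap p b ∈ K where
  refl a := by simp [one_mem]
  symm h := by simpa using inv_mem h
  trans h h' := by simpa [mul_assoc] using mul_mem h h'

variable [Fintype α] {K : Subgroup (Perm α)} {p : α}

theorem IsThreeCycle.mem_of_swap_mul_swap_mem {g : Perm α} (hg : g.IsThreeCycle)
    (hK : ∀ a ∈ g.support, ∀ b ∈ g.support, a ≠ p → b ≠ p → swap p a * swap p b ∈ K) :
    g ∈ K := by
  by_cases hp : p ∈ g.support
  · obtain ⟨a, rfl⟩ : ∃ a, g a = p := g.surjective p
    have ha : a ∈ g.support := apply_mem_support.mp hp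
    rw [hg.eq_swap_mul_swap_iff_mem_support.mpr ha, swap_comm]
    exact hK a ha _ (apply_mem_support.mpr hp) (mem_support.mp ha).symm (mem_support.mp hp)
  · obtain ⟨a, ha⟩ : g.support.Nonempty := Finset.card_pos.mp (by simp [hg.card_support])
    have hb : g a ∈ g.support := apply_mem_support.mpr ha
    have hc : g (g a) ∈ g.support := apply_mem_support.mpr hb
    have hne : ∀ x ∈ g.support, p ≠ x := fun x hx h => hp (h ▸ hx)
    rw [hg.eq_swap_mul_swap_iff_mem_support.mpr ha,
      swap_mul_swap_eq_pivot (hne a ha) (hne _ hc) (mem_support.mp ha).symm (mem_support.mp hb)]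
    exact mul_mem (hK _ hb _ ha (hne _ hb).symm (hne _ ha).symm)
      (hK _ hc _ hb (hne _ hc).symm (hne _ hb).symm)

theorem mem_of_swap_mul_swap_mem {q : α → Prop} [DecidablePred q]
    (hK : ∀ a b, q a → q b → a ≠ p → b ≠ p → swap p a * swap p b ∈ K) {σ : Perm α}
    (hsign : sign σ = 1) (hσ : ∀ x, ¬q x → σ x = x) : σ ∈ K := by
  have hq : ∀ x, q (σ x) ↔ q x := fun x => by
    by_cases hx : q x
    · refine iff_of_true (by_contra fun h => ?_) hx
      exact h (by rwa [σ.injective (hσ _ h)])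
    · rw [hσ x hx]
  have hsupp : ∀ x, σ x ≠ x → q x := fun x hx => not_not.mp (mt (hσ x) hx)
  have hτ : σ.subtypePerm hq ∈ Subgroup.closure {τ : Perm (Subtype q) | τ.IsThreeCycle} := by
    rw [closure_three_cycles_eq_alternating, mem_alternatingGroup, sign_subtypePerm _ _ hsupp,
      hsign]
  rw [← ofSubtype_subtypePerm hq hsupp]
  refine Subgroup.closure_induction (p := fun τ _ => ofSubtype τ ∈ K) (fun τ hτ => ?_)
    (by simp [one_mem]) (fun τ τ' _ _ h h' => by simpa using mul_mem h h')
    (fun τ _ h => by simpa using inv_mem h) hτ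
  have hqτ : ∀ x ∈ (ofSubtype τ).support, q x := fun x hx =>
    by_contra fun h => mem_support.mp hx (ofSubtype_apply_of_not_mem τ h)
  exact IsThreeCycle.mem_of_swap_mul_swap_mem (p := p)
    (by rwa [IsThreeCycle, cycleType_ofSubtype]) fun a ha b hb => hK a b (hqτ a ha) (hqτ b hb)

end Equiv.Perm

theorem Equivalence.rel_of_rel_add_two {r : ℕ → ℕ → Prop} (hr : Equivalence r) {m n : ℕ}
    (hm : r m (m + 1)) (hstep : ∀ i, m ≤ i → i + 2 ≤ n → r i (i + 2)) {a b : ℕ} (ha : m ≤ a)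
    (ha' : a ≤ n) (hb : m ≤ b) (hb' : b ≤ n) : r a b := by
  suffices h : ∀ a, m ≤ a → a ≤ n → r m a from hr.trans (hr.symm (h a ha ha')) (h b hb hb')
  intro a
  induction a using Nat.strong_induction_on with
  | _ a ih =>
    intro ha ha'
    rcases Nat.lt_or_ge a (m + 2) with h | h
    · obtain rfl | rfl : a = m ∨ a = m + 1 := by omega
      exacts [hr.refl _, hm]
    · obtain ⟨i, rfl⟩ : ∃ i, a = i + 2 := ⟨a - 2, by omega⟩
      exact hr.trans (ih i (by omega) (by omega) (by omega)) (hstep i (by omega) ha')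

namespace Fin

variable {n : ℕ}

theorem natCast_ne_natCast {i j : ℕ} (hi : i ≤ n) (hj : j ≤ n) (h : i ≠ j) :
    (i : Fin (n + 1)) ≠ j := by
  rwa [Ne, Fin.ext_iff, val_cast_of_lt (by omega), val_cast_of_lt (by omega)]

theorem zero_ne_natCast {i : ℕ} (hi : 1 ≤ i) (hin : i ≤ n) : (0 : Fin (n + 1)) ≠ i := by
  simpa using natCast_ne_natCast (n := n) (i := 0) (by omega) hin (by omega)

theorem one_ne_natCast {i : ℕ} (hi : 2 ≤ i) (hin : i ≤ n) : (1 : Fin (n + 1)) ≠ i := by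
  simpa using natCast_ne_natCast (n := n) (i := 1) (by omega) hin (by omega)

theorem two_le_val {x : Fin (n + 1)} (h0 : x ≠ 0) (h1 : x ≠ 1) : 2 ≤ (x : ℕ) := by
  rcases x with ⟨_ | _ | k, hk⟩
  · exact absurd rfl h0
  · rcases n with _ | n
    · omega
    · exact absurd rfl h1
  · exact Nat.le_add_left 2 k

end Fin

section

variable {n : ℕ} {K : Subgroup (Perm (Fin (n + 1)))}

open Fin

theorem swap_one_two_mul_swap_one_three_mem (hn : 5 ≤ n)
    (hgen : ∀ i, 2 ≤ i → i + 2 ≤ n →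
      swap 1 ((i + 2 : ℕ) : Fin (n + 1)) * swap 1 (i : Fin (n + 1)) ∈ K) :
    swap 1 ((2 : ℕ) : Fin (n + 1)) * swap 1 ((3 : ℕ) : Fin (n + 1)) ∈ K := by
  rw [← commutatorElement_swap_mul_swap (p := 1) (a := ((3 : ℕ) : Fin (n + 1)))
    (b := ((5 : ℕ) : Fin (n + 1))) (c := (2 : ℕ)) (d := (4 : ℕ))]
  · simp only [commutatorElement_def]
    have h3 := hgen 3 (by norm_num) (by omega)
    have h2 := hgen 2 le_rfl (by omega)
    exact mul_mem (mul_mem (mul_mem h3 h2) (inv_mem h3)) (inv_mem h2)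
  all_goals first
    | exact one_ne_natCast (by omega) (by omega)
    | exact natCast_ne_natCast (by omega) (by omega) (by omega)

theorem swap_one_mul_swap_one_mem (hn : 5 ≤ n)
    (hgen : ∀ i, 2 ≤ i → i + 2 ≤ n →
      swap 1 ((i + 2 : ℕ) : Fin (n + 1)) * swap 1 (i : Fin (n + 1)) ∈ K)
    {a b : Fin (n + 1)} (ha0 : a ≠ 0) (hb0 : b ≠ 0) (ha1 : a ≠ 1) (hb1 : b ≠ 1) :
    swap 1 a * swap 1 b ∈ K := by
  have hr := (equivalence_swap_mul_swap_mem K 1).comap (fun i : ℕ => (i : Fin (n + 1)))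
  simpa [Function.onFun] using hr.rel_of_rel_add_two (swap_one_two_mul_swap_one_three_mem hn hgen)
    (fun i h2 hi => hr.symm (hgen i h2 hi)) (two_le_val ha0 ha1) (is_le a)
    (two_le_val hb0 hb1) (is_le b)

end

theorem stmt1 (n : ℕ) (hn : 5 ≤ n) (σ : Equiv.Perm (Fin (n + 1))) :
    σ ∈ Subgroup.closure
      { c : Equiv.Perm (Fin (n + 1)) |
        ∃ i : ℕ, 2 ≤ i ∧ i + 2 ≤ n ∧
          c 1 = (i : Fin (n + 1)) ∧ c (i : Fin (n + 1)) = ((i + 2 : ℕ) : Fin (n + 1)) ∧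
          c ((i + 2 : ℕ) : Fin (n + 1)) = 1 ∧
          ∀ x : Fin (n + 1), x ≠ 1 → x ≠ (i : Fin (n + 1)) →
            x ≠ ((i + 2 : ℕ) : Fin (n + 1)) → c x = x } ↔
    (Equiv.Perm.sign σ = 1 ∧ σ 0 = 0) := by
  have hcycle (i : ℕ) (h2 : 2 ≤ i) (hi : i + 2 ≤ n) (c : Perm (Fin (n + 1))) :=
    eq_swap_mul_swap_iff (g := c) (Fin.one_ne_natCast h2 (by omega))
      (Fin.one_ne_natCast (by omega) hi) (Fin.natCast_ne_natCast (by omega) hi (by omega))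
  constructor
  · intro h
    have hH : σ ∈ alternatingGroup (Fin (n + 1)) ⊓ MulAction.stabilizer _ (0 : Fin (n + 1)) := by
      refine (Subgroup.closure_le _).mpr ?_ h
      rintro c ⟨i, h2, hi, hc⟩
      refine Subgroup.mem_inf.mpr ⟨?_, ?_⟩
      · rw [(hcycle i h2 hi c).mpr hc]
        exact mul_mem_alternatingGroup_of_isSwap ⟨_, _, Fin.one_ne_natCast (by omega) hi, rfl⟩
          ⟨_, _, Fin.one_ne_natCast h2 (by omega), rfl⟩
      · exact hc.2.2.2 0 (by simpa using Fin.zero_ne_natCast (n := n) le_rfl (by omega))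
          (Fin.zero_ne_natCast (by omega) (by omega)) (Fin.zero_ne_natCast (by omega) hi)
    exact ⟨mem_alternatingGroup.mp hH.1, hH.2⟩
  · rintro ⟨hsign, h0⟩
    refine mem_of_swap_mul_swap_mem (q := (· ≠ 0)) (p := 1)
      (fun a b ha hb ha1 hb1 => swap_one_mul_swap_one_mem hn ?_ ha hb ha1 hb1) hsign
      (fun x hx => by rwa [not_not.mp hx])
    exact fun i h2 hi => Subgroup.subset_closure ⟨i, h2, hi, (hcycle i h2 hi _).mp rfl⟩
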